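/- arXiv:1005.1793 — 3 statements merged into one kernel-verified Lean document; each statement's English description precedes it below -/
import Mathlib

section
/- Let y : [0,T] → [0,∞) be a continuous nonincreasing function and let A : [0,T] → [0,∞) be a continuous nondecreasing function with A(0) = 0 and A(T) ≤ a for some a > 0. If y(t) ≤ ∫_{(t,T]} y(s) dA(s) for every t ∈ [0,T] (Lebesgue–Stieltjes integral), then y ≡ 0 on [0,T]. -/
open Set MeasureTheory Filter Topology

/-!
Let `s` be the infimum of the zero set of `y`; since `y` is nonincreasing and nonnegative, it
vanishes on `(s, T]`. For `t ≤ s` the hypothesis then reads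
`y t ≤ ∫_{(t,s]} y dA ≤ y t (A s - A t)`, which forces `y t = 0` as soon as `A s - A t < 1`.
Taking `t = s` shows `y s = 0`, and if `s > 0` the continuity of `A` at `s` yields such a `t < s`,
contradicting the choice of `s`.
-/

theorem ContinuousAt.exists_mem_Ioo_sub_lt {f : ℝ → ℝ} {a s ε : ℝ} (hf : ContinuousAt f s)
    (has : a < s) (hε : 0 < ε) : ∃ t ∈ Ioo a s, f s - f t < ε := by
  have hnear : ∀ᶠ t in 𝓝[<] s, t ∈ Ioo a s ∧ f s - ε < f t :=
    Eventually.and (Ioo_mem_nhdsLT has) <|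
      nhdsWithin_le_nhds (hf.eventually (lt_mem_nhds (by linarith)))
  obtain ⟨t, ht, hft⟩ := hnear.exists
  exact ⟨t, ht, by linarith⟩

namespace StieltjesFunction

variable (A : StieltjesFunction ℝ) {y : ℝ → ℝ} {t s T : ℝ}

theorem setIntegral_Ioc_le_of_antitoneOn (hts : t ≤ s) (hy : AntitoneOn y (Icc t s)) :
    ∫ u in Ioc t s, y u ∂A.measure ≤ y t * (A s - A t) := by
  have hint : IntegrableOn y (Ioc t s) A.measure :=
    (hy.integrableOn_isCompact isCompact_Icc).mono_set Ioc_subset_Icc_self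
  calc ∫ u in Ioc t s, y u ∂A.measure
      ≤ ∫ _ in Ioc t s, y t ∂A.measure :=
        setIntegral_mono_on hint (integrableOn_const (by simp [A.measure_Ioc])) measurableSet_Ioc
          fun u hu ↦ hy (left_mem_Icc.2 hts) (Ioc_subset_Icc_self hu) hu.1.le
    _ = y t * (A s - A t) := by
        rw [setIntegral_const, smul_eq_mul, measureReal_def, A.measure_Ioc,
          ENNReal.toReal_ofReal (sub_nonneg.2 (A.mono hts)), mul_comm]

theorem eq_zero_of_le_setIntegral_Ioc (hts : t ≤ s) (hsT : s ≤ T) (hy : AntitoneOn y (Icc t s))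
    (hyt : 0 ≤ y t) (hzero : ∀ u ∈ Ioc s T, y u = 0) (hA : A s - A t < 1)
    (hle : y t ≤ ∫ u in Ioc t T, y u ∂A.measure) : y t = 0 := by
  have htail : ∫ u in Ioc t T, y u ∂A.measure = ∫ u in Ioc t s, y u ∂A.measure :=
    setIntegral_eq_of_subset_of_forall_sdiff_eq_zero measurableSet_Ioc
      (Ioc_subset_Ioc_right hsT) fun u hu ↦
        hzero u ⟨not_le.1 fun h ↦ hu.2 ⟨hu.1.1, h⟩, hu.1.2⟩
  have : y t ≤ y t * (A s - A t) :=
    hle.trans (htail ▸ A.setIntegral_Ioc_le_of_antitoneOn hts hy)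
  nlinarith

end StieltjesFunction

theorem stmt_11_general (T : ℝ) (hT : 0 < T)
    (y : ℝ → ℝ) (hyanti : AntitoneOn y (Icc 0 T))
    (hy0 : ∀ t ∈ Icc 0 T, 0 ≤ y t)
    (A : StieltjesFunction ℝ) (hA : Continuous A)
    (hineq : ∀ t ∈ Icc 0 T, y t ≤ ∫ s in Ioc t T, y s ∂A.measure) :
    ∀ t ∈ Icc 0 T, y t = 0 := by
  have hTmem : T ∈ Icc 0 T := right_mem_Icc.2 hT.le
  set Z := {u ∈ Icc 0 T | y u = 0}
  have hTZ : T ∈ Z := ⟨hTmem, A.eq_zero_of_le_setIntegral_Ioc le_rfl le_rfl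
    (hyanti.mono (Icc_subset_Icc hT.le le_rfl)) (hy0 T hTmem) (by simp) (by simp) (hineq T hTmem)⟩
  have hZbdd : BddBelow Z := ⟨0, fun u hu ↦ hu.1.1⟩
  set s := sInf Z
  have hs : s ∈ Icc 0 T := ⟨le_csInf ⟨T, hTZ⟩ fun u hu ↦ hu.1.1, csInf_le hZbdd hTZ⟩
  have hzero : ∀ u ∈ Ioc s T, y u = 0 := fun u hu ↦ by
    obtain ⟨z, hz, hzu⟩ := exists_lt_of_csInf_lt ⟨T, hTZ⟩ hu.1
    have hu' : u ∈ Icc 0 T := ⟨hz.1.1.trans hzu.le, hu.2⟩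
    exact le_antisymm (hz.2 ▸ hyanti hz.1 hu' hzu.le) (hy0 u hu')
  have hvanish : ∀ t ∈ Icc 0 T, t ≤ s → A s - A t < 1 → y t = 0 := fun t ht hts hA ↦
    A.eq_zero_of_le_setIntegral_Ioc hts hs.2 (hyanti.mono (Icc_subset_Icc ht.1 hs.2)) (hy0 t ht)
      hzero hA (hineq t ht)
  have hys : y s = 0 := hvanish s hs le_rfl (by simp)
  have hs0 : s = 0 := by
    by_contra hne
    have hpos : 0 < s := hs.1.lt_of_ne' hne
    obtain ⟨t, ⟨ht0, hts⟩, hAt⟩ := hA.continuousAt.exists_mem_Ioo_sub_lt hpos one_pos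
    have ht : t ∈ Icc 0 T := ⟨ht0.le, hts.le.trans hs.2⟩
    exact hts.not_ge (csInf_le hZbdd ⟨ht, hvanish t ht hts.le hAt⟩)
  intro t ht
  exact le_antisymm ((hyanti hs ht (hs0 ▸ ht.1)).trans_eq hys) (hy0 t ht)

/-- Backward generalized Gronwall lemma: if `y ≥ 0` is continuous nonincreasing on
`[0,T]`, `A` is a continuous nondecreasing (Stieltjes) function with `A 0 = 0` and
`A T ≤ a`, and `y t ≤ ∫_{(t,T]} y dA` for all `t ∈ [0,T]`, then `y ≡ 0` on `[0,T]`. -/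
theorem stmt_11 (T a : ℝ) (hT : 0 < T) (ha : 0 < a)
    (y : ℝ → ℝ) (hy : ContinuousOn y (Icc 0 T)) (hyanti : AntitoneOn y (Icc 0 T))
    (hy0 : ∀ t ∈ Icc 0 T, 0 ≤ y t)
    (A : StieltjesFunction ℝ) (hA : Continuous A) (hA0 : A 0 = 0)
    (hA0' : ∀ t ∈ Icc 0 T, 0 ≤ A t) (hAa : A T ≤ a)
    (hineq : ∀ t ∈ Icc 0 T, y t ≤ ∫ s in Ioc t T, y s ∂A.measure) :
    ∀ t ∈ Icc 0 T, y t = 0 :=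
  stmt_11_general T hT y hyanti hy0 A hA hineq
end

section
/- Let A : [0,T] → [0,∞) be continuous, strictly increasing with A(0) = 0, and define the right inverse τ_t = inf{ s ∈ [0,T] : A(s) ≥ t } ∧ T for t ≥ 0. Then for every bounded measurable y : [0,T] → [0,∞) and every t₀ ∈ [0, A(T)], the change of variables formula ∫_{(τ_{t₀}, T]} y(s) dA(s) = ∫_{t₀}^{A(T)} y(τ_u) du holds. -/
/-!
Continuity of `A` gives `A (τ u) = u` on `[0, A T]`, so `τ` is a lower adjoint of `A` there:
`τ u ≤ s ↔ u ≤ A s`. Consequently `{u ∈ (t₀, A T] | τ u ≤ x} = (t₀, A x]` for `x ∈ [τ t₀, T]`,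
i.e. the image of Lebesgue measure on `(t₀, A T]` under `τ` has the same distribution function as
`dA` on `(τ t₀, T]`. The formula is the change of variables for this image measure.
-/

open Set MeasureTheory

noncomputable def timeChange (A : ℝ → ℝ) (T t : ℝ) : ℝ := min (sInf {s ∈ Icc 0 T | t ≤ A s}) T

section TimeChange

variable {A : ℝ → ℝ} {T t s : ℝ}

lemma timeChange_mem (hA : ContinuousOn A (Icc 0 T)) (hT : 0 ≤ T) (ht : t ≤ A T) :
    timeChange A T t ∈ {s ∈ Icc 0 T | t ≤ A s} := by
  have hTmem : T ∈ {s ∈ Icc 0 T | t ≤ A s} := ⟨⟨hT, le_rfl⟩, ht⟩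
  have hbdd : BddBelow {s ∈ Icc 0 T | t ≤ A s} := ⟨0, fun _ hs ↦ hs.1.1⟩
  have hclosed : IsClosed {s ∈ Icc 0 T | t ≤ A s} :=
    hA.preimage_isClosed_of_isClosed isClosed_Icc isClosed_Ici
  rw [timeChange, min_eq_left (csInf_le hbdd hTmem)]
  exact hclosed.csInf_mem ⟨T, hTmem⟩ hbdd

lemma apply_timeChange (hA : ContinuousOn A (Icc 0 T)) (hT : 0 ≤ T) (ht : t ∈ Icc (A 0) (A T)) :
    A (timeChange A T t) = t := by
  obtain ⟨⟨hτ0, hτT⟩, hle⟩ := timeChange_mem hA hT ht.2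
  obtain ⟨s, hs, hAs⟩ := intermediate_value_Icc hτ0 (hA.mono (Icc_subset_Icc_right hτT)) ⟨ht.1, hle⟩
  have : timeChange A T t ≤ s :=
    min_le_of_left_le <| csInf_le ⟨0, fun _ hr ↦ hr.1.1⟩ ⟨⟨hs.1, hs.2.trans hτT⟩, hAs.ge⟩
  rwa [le_antisymm this hs.2]

lemma timeChange_le_iff (hA : ContinuousOn A (Icc 0 T)) (hAm : MonotoneOn A (Icc 0 T))
    (ht : t ∈ Icc (A 0) (A T)) (hs : s ∈ Icc 0 T) : timeChange A T t ≤ s ↔ t ≤ A s := by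
  have hT : 0 ≤ T := hs.1.trans hs.2
  refine ⟨fun h ↦ ?_, fun h ↦ min_le_of_left_le (csInf_le ⟨0, fun _ hr ↦ hr.1.1⟩ ⟨hs, h⟩)⟩
  calc t = A (timeChange A T t) := (apply_timeChange hA hT ht).symm
    _ ≤ A s := hAm (timeChange_mem hA hT ht.2).1 hs h

end TimeChange

section GaloisOnIntervals

variable {F g : ℝ → ℝ} {c d : ℝ}

lemma mapsTo_Ioc_of_le_iff (hcd : c ≤ d)
    (hgF : ∀ u ∈ Ioc (F c) (F d), ∀ s ∈ Icc c d, g u ≤ s ↔ u ≤ F s) :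
    MapsTo g (Ioc (F c) (F d)) (Ioc c d) := fun u hu ↦
  ⟨lt_of_not_ge fun h ↦ hu.1.not_ge ((hgF u hu c ⟨le_rfl, hcd⟩).1 h),
    (hgF u hu d ⟨hcd, le_rfl⟩).2 hu.2⟩

lemma monotoneOn_of_le_iff (hcd : c ≤ d)
    (hgF : ∀ u ∈ Ioc (F c) (F d), ∀ s ∈ Icc c d, g u ≤ s ↔ u ≤ F s) :
    MonotoneOn g (Ioc (F c) (F d)) := fun u hu v hv huv ↦ by
  have hgv := Ioc_subset_Icc_self (mapsTo_Ioc_of_le_iff hcd hgF hv)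
  exact (hgF u hu (g v) hgv).2 (huv.trans ((hgF v hv (g v) hgv).1 le_rfl))

lemma aemeasurable_restrict_Ioc_of_le_iff (hcd : c ≤ d)
    (hgF : ∀ u ∈ Ioc (F c) (F d), ∀ s ∈ Icc c d, g u ≤ s ↔ u ≤ F s) :
    AEMeasurable g (volume.restrict (Ioc (F c) (F d))) :=
  aemeasurable_restrict_of_monotoneOn measurableSet_Ioc (monotoneOn_of_le_iff hcd hgF)

end GaloisOnIntervals

section Pushforward

variable (F : StieltjesFunction ℝ) {g : ℝ → ℝ} {c d : ℝ}

theorem map_volume_restrict_Ioc_of_le_iff (hcd : c ≤ d)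
    (hgF : ∀ u ∈ Ioc (F c) (F d), ∀ s ∈ Icc c d, g u ≤ s ↔ u ≤ F s) :
    (volume.restrict (Ioc (F c) (F d))).map g = F.measure.restrict (Ioc c d) := by
  have : IsFiniteMeasure (volume.restrict (Ioc (F c) (F d))) :=
    isFiniteMeasure_restrict.2 measure_Ioc_lt_top.ne
  refine Measure.ext_of_Iic _ _ fun x ↦ ?_
  -- clamping `x` to `[c, d]` changes neither side
  set x' := max c (min x d)
  have hx' : x' ∈ Icc c d := ⟨le_max_left _ _, max_le hcd (min_le_right _ _)⟩
  have hpre : g ⁻¹' Iic x ∩ Ioc (F c) (F d) = Ioc (F c) (F x') := by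
    ext u
    refine ⟨fun ⟨hux, hu⟩ ↦ ⟨hu.1, (hgF u hu x' hx').1 ?_⟩, fun hu ↦ ?_⟩
    · exact le_max_of_le_right (le_min hux (mapsTo_Ioc_of_le_iff hcd hgF hu).2)
    · have hu' : u ∈ Ioc (F c) (F d) := ⟨hu.1, hu.2.trans (F.mono hx'.2)⟩
      refine ⟨?_, hu'⟩
      rcases le_max_iff.1 ((hgF u hu' x' hx').2 hu.2) with h | h
      · exact absurd h (mapsTo_Ioc_of_le_iff hcd hgF hu').1.not_ge
      · exact h.trans (min_le_left _ _)
  have hIic : Iic x ∩ Ioc c d = Ioc c x' := by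
    ext s
    simp only [mem_inter_iff, mem_Iic, mem_Ioc, le_max_iff, le_min_iff, x']
    grind
  rw [Measure.map_apply_of_aemeasurable (aemeasurable_restrict_Ioc_of_le_iff hcd hgF)
    measurableSet_Iic, Measure.restrict_apply' measurableSet_Ioc, hpre,
    Measure.restrict_apply measurableSet_Iic, hIic,
    Real.volume_Ioc, F.measure_Ioc]

theorem setIntegral_stieltjes_eq_setIntegral_comp_of_le_iff {E : Type*} [NormedAddCommGroup E]
    [NormedSpace ℝ E] (hcd : c ≤ d)
    (hgF : ∀ u ∈ Ioc (F c) (F d), ∀ s ∈ Icc c d, g u ≤ s ↔ u ≤ F s) {f : ℝ → E}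
    (hf : AEStronglyMeasurable f (F.measure.restrict (Ioc c d))) :
    ∫ s in Ioc c d, f s ∂F.measure = ∫ u in Ioc (F c) (F d), f (g u) := by
  rw [← map_volume_restrict_Ioc_of_le_iff F hcd hgF] at hf ⊢
  exact integral_map (aemeasurable_restrict_Ioc_of_le_iff hcd hgF) hf

end Pushforward

theorem stmt_12_general (T : ℝ) (hT : 0 < T) (A : StieltjesFunction ℝ)
    (hA : Continuous A) (hA0 : A 0 = 0)
    (τ : ℝ → ℝ) (hτ : ∀ t, τ t = min (sInf {s ∈ Icc 0 T | t ≤ A s}) T)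
    (y : ℝ → ℝ) (hmeas : Measurable y)
    (t₀ : ℝ) (ht₀ : t₀ ∈ Icc 0 (A T)) :
    ∫ s in Ioc (τ t₀) T, y s ∂A.measure = ∫ u in t₀..(A T), y (τ u) := by
  obtain rfl : τ = timeChange A T := funext hτ
  have hAc := hA.continuousOn (s := Icc 0 T)
  have hAm := A.mono.monotoneOn (Icc 0 T)
  have ht₀' : t₀ ∈ Icc (A 0) (A T) := by rwa [hA0]
  have hτ₀ := (timeChange_mem hAc hT.le ht₀.2).1
  have hAτ₀ : A (timeChange A T t₀) = t₀ := apply_timeChange hAc hT.le ht₀'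
  have hGalois : ∀ u ∈ Ioc (A (timeChange A T t₀)) (A T), ∀ s ∈ Icc (timeChange A T t₀) T,
      timeChange A T u ≤ s ↔ u ≤ A s := fun u hu s hs ↦
    timeChange_le_iff hAc hAm ⟨ht₀'.1.trans (hAτ₀ ▸ hu.1.le), hu.2⟩ ⟨hτ₀.1.trans hs.1, hs.2⟩
  rw [setIntegral_stieltjes_eq_setIntegral_comp_of_le_iff A hτ₀.2 hGalois
    hmeas.aestronglyMeasurable, hAτ₀, intervalIntegral.integral_of_le ht₀.2]

/-- Change of variables for the Lebesgue–Stieltjes integral via the generalized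
right inverse `τ t = inf { s ∈ [0,T] : A s ≥ t } ∧ T` of a continuous strictly
increasing function `A` with `A 0 = 0`:
`∫_{(τ t₀, T]} y dA = ∫_{t₀}^{A T} y(τ u) du`. -/
theorem stmt_12 (T : ℝ) (hT : 0 < T) (A : StieltjesFunction ℝ)
    (hA : Continuous A) (hA0 : A 0 = 0) (hAmono : StrictMonoOn A (Icc 0 T))
    (τ : ℝ → ℝ) (hτ : ∀ t, τ t = min (sInf {s ∈ Icc 0 T | t ≤ A s}) T)
    (y : ℝ → ℝ) (hmeas : Measurable y) (hnonneg : ∀ t, 0 ≤ y t)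
    (hbdd : ∃ M : ℝ, ∀ t, y t ≤ M)
    (t₀ : ℝ) (ht₀ : t₀ ∈ Icc 0 (A T)) :
    ∫ s in Ioc (τ t₀) T, y s ∂A.measure = ∫ u in t₀..(A T), y (τ u) :=
  stmt_12_general T hT A hA hA0 τ hτ y hmeas t₀ ht₀
end

section
/- Let T > 0, let y, s : [0,T] → ℝ be continuous functions with y ≥ s pointwise, let K_n, K : [0,T] → [0,∞) be continuous nondecreasing functions with K_n(0)=K(0)=0, and suppose y_n : [0,T] → ℝ are continuous with y_n → y uniformly on [0,T] and K_n → K uniformly on [0,T]. Then ∫_{(0,T]} 1_{{y(t) > s(t)}} (y_n(t) − s(t)) dK_n(t) → ∫_{(0,T]} 1_{{y(t) > s(t)}} (y(t) − s(t)) dK(t). -/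
/-!
On `[0, T]` the limit integrand `1_{y > s} (y - s)` is the continuous function `(y - s)⁺`, and
`|1_{y > s} (yₙ - s) - 1_{y > s} (y - s)| ≤ |yₙ - y|`; since the masses `Kₙ T - Kₙ 0` stay
bounded, replacing `yₙ` by `y` costs nothing in the limit. For a continuous integrand, the
Stieltjes integral over `(a, b]` is approximated, uniformly in the integrator, by right-endpoint
Riemann–Stieltjes sums on a fine partition, and these finite sums converge because `Kₙ → K`
pointwise.
-/

open Set MeasureTheory Filter Topology
open scoped ENNReal

theorem TendstoUniformlyOn.indicator {α β ι : Type*} [UniformSpace β] [Zero β]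
    {F : ι → α → β} {f : α → β} {l : Filter ι} {S : Set α}
    (h : TendstoUniformlyOn F f l S) (A : Set α) :
    TendstoUniformlyOn (fun i => A.indicator (F i)) (A.indicator f) l S := by
  intro U hU
  filter_upwards [h U hU] with i hi x hx
  by_cases hxA : x ∈ A
  · simpa [hxA] using hi x hx
  · simpa [hxA] using refl_mem_uniformity hU

theorem tendsto_setIntegral_sub_of_tendstoUniformlyOn {α ι E : Type*} [MeasurableSpace α]
    [NormedAddCommGroup E] [NormedSpace ℝ E] {l : Filter ι} {μ : ι → Measure α} {S : Set α}
    {F : ι → α → E} {f : α → E} (hμS : ∀ i, μ i S < ∞)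
    (hμ : IsBoundedUnder (· ≤ ·) l fun i => (μ i).real S) (hF : TendstoUniformlyOn F f l S)
    (hFi : ∀ i, IntegrableOn (F i) S (μ i)) (hfi : ∀ i, IntegrableOn f S (μ i)) :
    Tendsto (fun i => ∫ x in S, F i x ∂μ i - ∫ x in S, f x ∂μ i) l (𝓝 0) := by
  obtain ⟨C, hC⟩ := hμ
  set M := max C 0 + 1
  have hM : 0 < M := by positivity
  refine Metric.tendsto_nhds.2 fun ε hε => ?_
  filter_upwards [hC, Metric.tendstoUniformlyOn_iff.1 hF (ε / M) (by positivity)]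
    with i hCi hFi'
  rw [dist_zero_right, ← integral_sub (hFi i) (hfi i)]
  calc ‖∫ x in S, (F i x - f x) ∂μ i‖ ≤ ε / M * (μ i).real S :=
        norm_setIntegral_le_of_norm_le_const (hμS i) fun x hx => by
          rw [← dist_eq_norm, dist_comm]
          exact (hFi' x hx).le
    _ ≤ ε / M * max C 0 := by gcongr; exact le_max_of_le_left hCi
    _ < ε / M * M := by gcongr; exact lt_add_one _
    _ = ε := div_mul_cancel₀ ε hM.ne'

namespace StieltjesFunction

variable (K : StieltjesFunction ℝ)

def riemannStieltjesSum (g : ℝ → ℝ) (t : ℕ → ℝ) (m : ℕ) : ℝ :=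
  ∑ i ∈ Finset.range m, g (t (i + 1)) * (K (t (i + 1)) - K (t i))

variable {g : ℝ → ℝ} {a b ε : ℝ}

theorem measureReal_Ioc (hab : a ≤ b) : K.measure.real (Ioc a b) = K b - K a := by
  rw [measureReal_def, measure_Ioc, ENNReal.toReal_ofReal (sub_nonneg.2 (K.mono hab))]

theorem tendsto_measureReal_Ioc {Kn : ℕ → StieltjesFunction ℝ}
    (ha : Tendsto (fun n => Kn n a) atTop (𝓝 (K a)))
    (hb : Tendsto (fun n => Kn n b) atTop (𝓝 (K b))) :
    Tendsto (fun n => (Kn n).measure.real (Ioc a b)) atTop (𝓝 (K.measure.real (Ioc a b))) := by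
  simp only [measureReal_def, measure_Ioc, ENNReal.toReal_ofReal']
  exact (hb.sub ha).max tendsto_const_nhds

theorem abs_setIntegral_Ioc_sub_mul_le (hab : a ≤ b) (hg : IntegrableOn g (Ioc a b) K.measure)
    (h : ∀ x ∈ Ioc a b, |g x - g b| ≤ ε) :
    |∫ x in Ioc a b, g x ∂K.measure - g b * (K b - K a)| ≤ ε * (K b - K a) := by
  have hfin : K.measure (Ioc a b) < ∞ := measure_Ioc_lt_top
  rw [← K.measureReal_Ioc hab, mul_comm, ← smul_eq_mul, ← setIntegral_const,
    ← integral_sub hg (integrableOn_const hfin.ne)]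
  exact norm_setIntegral_le_of_norm_le_const (f := fun x => g x - g b) hfin h

theorem abs_setIntegral_Ioc_sub_riemannStieltjesSum_le {t : ℕ → ℝ} (ht : Monotone t) {m : ℕ}
    (hg : IntegrableOn g (Ioc (t 0) (t m)) K.measure)
    (h : ∀ i < m, ∀ x ∈ Ioc (t i) (t (i + 1)), |g x - g (t (i + 1))| ≤ ε) :
    |∫ x in Ioc (t 0) (t m), g x ∂K.measure - K.riemannStieltjesSum g t m|
      ≤ ε * (K (t m) - K (t 0)) := by
  have hsub : ∀ i < m, IntegrableOn g (Ioc (t i) (t (i + 1))) K.measure := fun i hi =>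
    hg.mono_set (Ioc_subset_Ioc (ht (Nat.zero_le i)) (ht hi))
  have hsplit : ∫ x in Ioc (t 0) (t m), g x ∂K.measure =
      ∑ i ∈ Finset.range m, ∫ x in Ioc (t i) (t (i + 1)), g x ∂K.measure := by
    rw [← intervalIntegral.integral_of_le (ht (Nat.zero_le m)),
      ← intervalIntegral.sum_integral_adjacent_intervals fun i hi =>
        (intervalIntegrable_iff_integrableOn_Ioc_of_le (ht i.le_succ)).2 (hsub i hi)]
    exact Finset.sum_congr rfl fun i _ => intervalIntegral.integral_of_le (ht i.le_succ)
  rw [hsplit, riemannStieltjesSum, ← Finset.sum_sub_distrib,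
    ← Finset.sum_range_sub (fun i => K (t i)), Finset.mul_sum]
  refine (Finset.abs_sum_le_sum_abs _ _).trans (Finset.sum_le_sum fun i hi => ?_)
  have hi := Finset.mem_range.1 hi
  exact K.abs_setIntegral_Ioc_sub_mul_le (ht i.le_succ) (hsub i hi) (h i hi)

theorem exists_abs_setIntegral_Ioc_sub_riemannStieltjesSum_le (hg : ContinuousOn g (Icc a b))
    (hab : a ≤ b) (hε : 0 < ε) :
    ∃ (m : ℕ) (t : ℕ → ℝ), (∀ i ≤ m, t i ∈ Icc a b) ∧ ∀ K : StieltjesFunction ℝ,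
      |∫ x in Ioc a b, g x ∂K.measure - K.riemannStieltjesSum g t m| ≤ ε * (K b - K a) := by
  obtain ⟨δ, hδ, hgδ⟩ := Metric.uniformContinuousOn_iff_le.1
    (isCompact_Icc.uniformContinuousOn_of_continuous hg) ε hε
  obtain ⟨m, hm⟩ := exists_nat_gt ((b - a) / δ)
  have hm0 : (0 : ℝ) < m := (div_nonneg (sub_nonneg.2 hab) hδ.le).trans_lt hm
  set t : ℕ → ℝ := fun i => a + i * ((b - a) / m)
  have hstep : ∀ i, t (i + 1) - t i = (b - a) / m := fun i => by simp only [t]; push_cast; ring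
  have hstep_le : (b - a) / m ≤ δ := by
    rw [div_le_iff₀ hm0, mul_comm]; exact ((div_lt_iff₀ hδ).1 hm).le
  have ht : Monotone t := fun i j hij => by
    have : 0 ≤ (b - a) / m := div_nonneg (sub_nonneg.2 hab) hm0.le
    simp only [t]; gcongr
  have ht0 : t 0 = a := by simp [t]
  have htm : t m = b := by simp only [t]; field_simp; ring
  have htmem : ∀ i ≤ m, t i ∈ Icc a b := fun i hi =>
    ⟨ht0 ▸ ht (Nat.zero_le i), htm ▸ ht hi⟩
  refine ⟨m, t, htmem, fun K => ?_⟩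
  have hK := K.abs_setIntegral_Ioc_sub_riemannStieltjesSum_le ht (m := m)
    (by rw [ht0, htm]; exact (hg.integrableOn_Icc).mono_set Ioc_subset_Icc_self)
    fun i hi x hx => by
      have hx' : x ∈ Icc a b :=
        ⟨(htmem i hi.le).1.trans hx.1.le, hx.2.trans (htmem (i + 1) hi).2⟩
      have hdist : dist x (t (i + 1)) ≤ δ := by
        rw [Real.dist_eq, abs_of_nonpos (by linarith [hx.2])]
        linarith [hx.1, hstep i]
      simpa only [Real.dist_eq] using hgδ x hx' (t (i + 1)) (htmem (i + 1) hi) hdist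
  rwa [ht0, htm] at hK

theorem tendsto_setIntegral_Ioc_of_tendsto {Kn : ℕ → StieltjesFunction ℝ}
    (hg : ContinuousOn g (Icc a b))
    (hK : ∀ x ∈ Icc a b, Tendsto (fun n => Kn n x) atTop (𝓝 (K x))) :
    Tendsto (fun n => ∫ x in Ioc a b, g x ∂(Kn n).measure) atTop
      (𝓝 (∫ x in Ioc a b, g x ∂K.measure)) := by
  rcases lt_or_ge b a with hba | hab
  · simp [Ioc_eq_empty_of_le hba.le]
  refine Metric.tendsto_nhds.2 fun ε hε => ?_
  set D := K b - K a + 1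
  have hD : 0 < D := by linarith [K.mono hab]
  obtain ⟨m, t, ht, hRS⟩ :=
    exists_abs_setIntegral_Ioc_sub_riemannStieltjesSum_le hg hab (ε := ε / (3 * D)) (by positivity)
  have hKb := hK b (right_mem_Icc.2 hab)
  have hKa := hK a (left_mem_Icc.2 hab)
  have hsum : Tendsto (fun n => (Kn n).riemannStieltjesSum g t m) atTop
      (𝓝 (K.riemannStieltjesSum g t m)) :=
    tendsto_finsetSum _ fun i hi => by
      have hi := Finset.mem_range.1 hi
      exact ((hK _ (ht _ hi)).sub (hK _ (ht _ hi.le))).const_mul _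
  filter_upwards [(hKb.sub hKa).eventually (gt_mem_nhds (lt_add_one (K b - K a))),
    Metric.tendsto_nhds.1 hsum (ε / 3) (by positivity)] with n hn hsn
  have hD3 : ε / (3 * D) * D = ε / 3 := by field_simp
  have e1 : |∫ x in Ioc a b, g x ∂(Kn n).measure - (Kn n).riemannStieltjesSum g t m| ≤ ε / 3 :=
    (hRS (Kn n)).trans (hD3 ▸ by gcongr)
  have e2 : |∫ x in Ioc a b, g x ∂K.measure - K.riemannStieltjesSum g t m| ≤ ε / 3 :=
    (hRS K).trans (hD3 ▸ by gcongr; linarith)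
  rw [Real.dist_eq] at hsn ⊢
  rw [abs_le] at e1 e2
  rw [abs_lt] at hsn ⊢
  constructor <;> linarith [e1.1, e1.2, e2.1, e2.2, hsn.1, hsn.2]

end StieltjesFunction

theorem stmt_18_general (T : ℝ)
    (y s : ℝ → ℝ) (hy : Continuous y) (hs : Continuous s)
    (hys : ∀ t ∈ Icc 0 T, s t ≤ y t)
    (Kn : ℕ → StieltjesFunction ℝ) (K : StieltjesFunction ℝ)
    (yn : ℕ → ℝ → ℝ) (hync : ∀ n, Continuous (yn n))
    (hyn : TendstoUniformlyOn (fun n t => yn n t) y atTop (Icc 0 T))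
    (hKn : TendstoUniformlyOn (fun n t => Kn n t) K atTop (Icc 0 T)) :
    Tendsto (fun n =>
        ∫ t in Ioc 0 T, indicator {t | s t < y t} (fun t => yn n t - s t) t
          ∂(Kn n).measure)
      atTop
      (nhds (∫ t in Ioc 0 T, indicator {t | s t < y t} (fun t => y t - s t) t
          ∂K.measure)) := by
  rcases lt_or_ge T 0 with hT | hT
  · simp [Ioc_eq_empty_of_le hT.le]
  set A := {t | s t < y t}
  have hA : MeasurableSet A := (isOpen_lt hs hy).measurableSet
  have hKpt : ∀ x ∈ Icc 0 T, Tendsto (fun n => Kn n x) atTop (𝓝 (K x)) :=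
    fun x hx => hKn.tendsto_at hx
  have hcont : ContinuousOn (A.indicator fun t => y t - s t) (Icc 0 T) :=
    (((hy.sub hs).max continuous_const : Continuous fun t => max (y t - s t) 0)).continuousOn.congr
      fun t ht => by
        by_cases htA : s t < y t
        · simp [A, htA, htA.le]
        · simp [A, le_antisymm (not_lt.1 htA) (hys t ht)]
  have hunif :
      TendstoUniformlyOn (fun n t => yn n t - s t) (fun t => y t - s t) atTop (Icc 0 T) :=
    hyn.sub (f' := fun _ => s) fun _ hU => Eventually.of_forall fun _ _ _ => refl_mem_uniformity hU
  have hdiff := tendsto_setIntegral_sub_of_tendstoUniformlyOn (fun _ => measure_Ioc_lt_top)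
    (K.tendsto_measureReal_Ioc (hKpt 0 (left_mem_Icc.2 hT))
      (hKpt T (right_mem_Icc.2 hT))).isBoundedUnder_le
    ((hunif.indicator A).mono Ioc_subset_Icc_self)
    (fun n => ((hync n).sub hs).integrableOn_Ioc.indicator hA)
    (fun _ => (hy.sub hs).integrableOn_Ioc.indicator hA)
  simpa only [sub_add_cancel, zero_add] using
    hdiff.add (K.tendsto_setIntegral_Ioc_of_tendsto hcont hKpt)

/-- Convergence of Stieltjes integrals: if `y_n → y` uniformly on `[0,T]`,
`K_n → K` uniformly on `[0,T]` (continuous nondecreasing, vanishing at `0`), and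
`y ≥ s` on `[0,T]`, then
`∫_{(0,T]} 1_{{y>s}} (y_n − s) dK_n → ∫_{(0,T]} 1_{{y>s}} (y − s) dK`. -/
theorem stmt_18 (T : ℝ) (hT : 0 < T)
    (y s : ℝ → ℝ) (hy : Continuous y) (hs : Continuous s)
    (hys : ∀ t ∈ Icc 0 T, s t ≤ y t)
    (Kn : ℕ → StieltjesFunction ℝ) (K : StieltjesFunction ℝ)
    (hKnc : ∀ n, Continuous (Kn n)) (hKc : Continuous K)
    (hKn0 : ∀ n, Kn n 0 = 0) (hK0 : K 0 = 0)
    (yn : ℕ → ℝ → ℝ) (hync : ∀ n, Continuous (yn n))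
    (hyn : TendstoUniformlyOn (fun n t => yn n t) y atTop (Icc 0 T))
    (hKn : TendstoUniformlyOn (fun n t => Kn n t) K atTop (Icc 0 T)) :
    Tendsto (fun n =>
        ∫ t in Ioc 0 T, indicator {t | s t < y t} (fun t => yn n t - s t) t
          ∂(Kn n).measure)
      atTop
      (nhds (∫ t in Ioc 0 T, indicator {t | s t < y t} (fun t => y t - s t) t
          ∂K.measure)) :=
  stmt_18_general T y s hy hs hys Kn K yn hync hyn hKn
end
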